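/- Let n ≥ 2, k > 0, and for i = 1,…,n let p_i > 0, q_i − p_i > 0, η_i > 0, ζ_i ≥ 0. Define β_{ζ,k}^{(p,q)}(φ; η) = (1/k^{n−1}) ∫_{E_{n-1}} ∏_{i=1}^n t_i^{φ_i/k−1} ₁F_{1,k}(p_i; q_i; −η_i^k/(k t_i) − ζ_i^k t_i/η_i^k) dt and β_k(φ; η) = (1/k^{n−1}) ∫_{E_{n-1}} ∏_i t_i^{φ_i/k−1} e^{−η_i^k/(k t_i)} dt. Then for all φ ∈ (0,∞)^n: β_{ζ,k}^{(p,q)}(φ; η) ≥ β_k(φ; η) · ∏_{i=1}^n ₁F_{1,k}(p_i; q_i; −ζ_i^k/η_i^k). -/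

import Mathlib

/-!
For `0 < t ≤ 1`, `A, B ≥ 0` and `u ∈ (0, 1)` we have `e^{-A} e^{-B u} ≤ e^{-(A + B t) u}`, so the
Euler integral gives `e^{-A} ₁F_{1,k}(p; q; -B) ≤ ₁F_{1,k}(p; q; -A - B t)`. Applied with
`A = η_i^k / (k t_i)`, `B = ζ_i^k / η_i^k` this compares the two integrands factor by factor.

The analytic content is integrability. Both integrands are bounded by constant multiples of the
Dirichlet density `∏ t_i ^ (φ_i / k - 1)`, whose exponents exceed `-1`. The simplex is covered by
the regions `t_i ≥ 1/n`; the affine involution swapping the barycentric coordinates `t_i` and `t_n`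
is volume preserving and carries the region `t_i ≥ 1/n` to `t_n ≥ 1/n`, where the density is
dominated by a product of integrable one-variable powers on the unit cube.
-/

open MeasureTheory Real Set

noncomputable section

/-- Open standard (n-1)-simplex in ℝ^{n-1}. -/
def simplexInt (n : ℕ) : Set (Fin (n-1) → ℝ) :=
  {t | (∀ i, 0 < t i) ∧ ∑ i, t i < 1}

/-- Barycentric coordinates: `t_1, …, t_{n-1}` and `t_n = 1 - ∑_{i<n} t_i`. -/
def bary (n : ℕ) (t : Fin (n-1) → ℝ) (i : Fin n) : ℝ :=
  if h : (i : ℕ) < n - 1 then t ⟨i, h⟩ else 1 - ∑ j, t j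

/-- Product of the n barycentric coordinates. -/
def piT (n : ℕ) (t : Fin (n-1) → ℝ) : ℝ := ∏ i : Fin n, bary n t i

/-- Euler-integral confluent hypergeometric k-function ₁F_{1,k}(a;b;l). -/
def F1k (k a b l : ℝ) : ℝ :=
  (1/k) * (Real.Gamma b / (Real.Gamma a * Real.Gamma (b-a))) *
    ∫ u in Set.Ioo (0:ℝ) 1, u ^ (a/k - 1) * (1-u) ^ ((b-a)/k - 1) * Real.exp (l*u)

/-- Beta k-function of n variables. -/
def betaK (n : ℕ) (k : ℝ) (φ : Fin n → ℝ) : ℝ :=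
  (1/k^(n-1)) * ∫ t in simplexInt n, ∏ i, bary n t i ^ (φ i / k - 1)

/-- Extended beta k-function β_k(φ; η). -/
def betaKe (n : ℕ) (k : ℝ) (φ : Fin n → ℝ) (η : ℝ) : ℝ :=
  (1/k^(n-1)) * ∫ t in simplexInt n,
    (∏ i, bary n t i ^ (φ i / k - 1)) * Real.exp (-(η^k)/(k * piT n t))

/-- Generalized beta k-function of the first kind. -/
def betaFirst (n : ℕ) (k a b η ζ : ℝ) (φ : Fin n → ℝ) : ℝ :=
  (1/k^(n-1)) * ∫ t in simplexInt n,
    (∏ i, bary n t i ^ (φ i / k - 1)) *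
      F1k k a b (-(η^k)/(k * piT n t) - ζ^k * piT n t / η^k)

/-- Generalized beta k-function of the second kind. -/
def betaSecond (n : ℕ) (k : ℝ) (p q η ζ φ : Fin n → ℝ) : ℝ :=
  (1/k^(n-1)) * ∫ t in simplexInt n,
    ∏ i, (bary n t i ^ (φ i / k - 1) *
      F1k k (p i) (q i) (-((η i)^k)/(k * bary n t i) - (ζ i)^k * bary n t i / (η i)^k))

/-- Extended beta k-function of the second kind (vector η). -/
def betaKe2 (n : ℕ) (k : ℝ) (φ η : Fin n → ℝ) : ℝ :=
  (1/k^(n-1)) * ∫ t in simplexInt n,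
    ∏ i, (bary n t i ^ (φ i / k - 1) * Real.exp (-((η i)^k)/(k * bary n t i)))

lemma integrableOn_rpow_mul_one_sub_rpow {x y : ℝ} (hx : 0 < x) (hy : 0 < y) :
    IntegrableOn (fun u : ℝ => u ^ (x - 1) * (1 - u) ^ (y - 1)) (Ioo 0 1) := by
  have h := Complex.betaIntegral_convergent (u := x) (v := y) (by simpa) (by simpa)
  rw [intervalIntegrable_iff, uIoc_of_le zero_le_one] at h
  refine IntegrableOn.congr_fun (h.mono_set Ioo_subset_Ioc_self).norm (fun u hu => ?_)
    measurableSet_Ioo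
  have h1u : ((1 - u : ℝ) : ℂ) = 1 - (u : ℂ) := by push_cast; ring
  rw [norm_mul, ← h1u, Complex.norm_cpow_eq_rpow_re_of_pos hu.1,
    Complex.norm_cpow_eq_rpow_re_of_pos (sub_pos.2 hu.2)]
  norm_num

lemma integrableOn_rpow_mul_one_sub_rpow_mul_exp {x y : ℝ} (hx : 0 < x) (hy : 0 < y) (l : ℝ) :
    IntegrableOn (fun u : ℝ => u ^ (x - 1) * (1 - u) ^ (y - 1) * exp (l * u)) (Ioo 0 1) := by
  refine (integrableOn_rpow_mul_one_sub_rpow hx hy).mul_bdd (c := exp |l|)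
    (by fun_prop) (ae_restrict_of_forall_mem measurableSet_Ioo fun u hu => ?_)
  rw [norm_of_nonneg (exp_pos _).le, exp_le_exp]
  calc l * u ≤ |l * u| := le_abs_self _
    _ ≤ |l| := by
      rw [abs_mul, abs_of_pos hu.1]
      exact mul_le_of_le_one_right (abs_nonneg l) hu.2.le

section F1k

variable {k a b : ℝ}

lemma F1k_prefactor_nonneg (hk : 0 < k) (ha : 0 < a) (hba : 0 < b - a) :
    0 ≤ 1 / k * (Gamma b / (Gamma a * Gamma (b - a))) := by
  have := Gamma_pos_of_pos (show 0 < b by linarith)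
  have := Gamma_pos_of_pos ha
  have := Gamma_pos_of_pos hba
  positivity

lemma F1k_nonneg (hk : 0 < k) (ha : 0 < a) (hba : 0 < b - a) (l : ℝ) : 0 ≤ F1k k a b l := by
  refine mul_nonneg (F1k_prefactor_nonneg hk ha hba)
    (setIntegral_nonneg measurableSet_Ioo fun u hu => ?_)
  have := rpow_nonneg hu.1.le (a / k - 1)
  have := rpow_nonneg (sub_pos.2 hu.2).le ((b - a) / k - 1)
  positivity

lemma mul_F1k_le_F1k (hk : 0 < k) (ha : 0 < a) (hba : 0 < b - a) {r l l' : ℝ}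
    (hle : ∀ u ∈ Ioo (0 : ℝ) 1, r * exp (l * u) ≤ exp (l' * u)) :
    r * F1k k a b l ≤ F1k k a b l' := by
  have hx : 0 < a / k := div_pos ha hk
  have hy : 0 < (b - a) / k := div_pos hba hk
  unfold F1k
  rw [mul_left_comm, ← integral_const_mul]
  refine mul_le_mul_of_nonneg_left (setIntegral_mono_on
    ((integrableOn_rpow_mul_one_sub_rpow_mul_exp hx hy l).const_mul r)
    (integrableOn_rpow_mul_one_sub_rpow_mul_exp hx hy l') measurableSet_Ioo fun u hu => ?_)
    (F1k_prefactor_nonneg hk ha hba)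
  rw [mul_left_comm]
  exact mul_le_mul_of_nonneg_left (hle u hu)
    (mul_nonneg (rpow_nonneg hu.1.le _) (rpow_nonneg (sub_pos.2 hu.2).le _))

lemma monotone_F1k (hk : 0 < k) (ha : 0 < a) (hba : 0 < b - a) : Monotone (F1k k a b) :=
  fun l l' hl => by
    simpa using mul_F1k_le_F1k hk ha hba (r := 1) fun u hu =>
      by simpa using mul_le_mul_of_nonneg_right hl hu.1.le

lemma exp_neg_mul_F1k_neg_le (hk : 0 < k) (ha : 0 < a) (hba : 0 < b - a) {A B x : ℝ}
    (hA : 0 ≤ A) (hB : 0 ≤ B) (hx : x ≤ 1) :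
    exp (-A) * F1k k a b (-B) ≤ F1k k a b (-A - B * x) := by
  refine mul_F1k_le_F1k hk ha hba fun u hu => ?_
  rw [← exp_add, exp_le_exp]
  nlinarith [mul_nonneg hA (sub_pos.2 hu.2).le,
    mul_nonneg (mul_nonneg hB hu.1.le) (sub_nonneg.2 hx)]

end F1k

section Simplex

variable {n m : ℕ}

lemma measurable_bary (i : Fin n) : Measurable fun t : Fin (n - 1) → ℝ => bary n t i := by
  unfold bary
  split_ifs
  · exact measurable_pi_apply _
  · exact measurable_const.sub (Finset.measurable_sum _ fun j _ => measurable_pi_apply j)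

lemma measurableSet_simplexInt : MeasurableSet (simplexInt n) := by
  simp only [simplexInt, ofPred_and, ofPred_forall]
  exact (MeasurableSet.iInter fun i =>
    measurableSet_lt measurable_const (measurable_pi_apply i)).inter
    (measurableSet_lt (Finset.measurable_sum _ fun j _ => measurable_pi_apply j) measurable_const)

lemma simplexInt_subset_pi_Ioo : simplexInt n ⊆ univ.pi fun _ => Ioo (0 : ℝ) 1 :=
  fun _ ht j _ => ⟨ht.1 j, (Finset.single_le_sum (fun i _ => (ht.1 i).le)
    (Finset.mem_univ j)).trans_lt ht.2⟩

lemma bary_pos {t : Fin (n - 1) → ℝ} (ht : t ∈ simplexInt n) (i : Fin n) : 0 < bary n t i := by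
  unfold bary
  split_ifs
  · exact ht.1 _
  · linarith [ht.2]

lemma bary_le_one {t : Fin (n - 1) → ℝ} (ht : t ∈ simplexInt n) (i : Fin n) :
    bary n t i ≤ 1 := by
  unfold bary
  split_ifs
  · exact (simplexInt_subset_pi_Ioo ht _ (mem_univ _)).2.le
  · linarith [Finset.sum_nonneg fun j (_ : j ∈ Finset.univ) => (ht.1 j).le]

@[simp]
lemma bary_castSucc (t : Fin m → ℝ) (j : Fin m) : bary (m + 1) t j.castSucc = t j := by
  simp [bary]

@[simp]
lemma bary_last (t : Fin m → ℝ) : bary (m + 1) t (Fin.last m) = 1 - ∑ j, t j := by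
  simp [bary]

lemma sum_bary (t : Fin m → ℝ) : ∑ i, bary (m + 1) t i = 1 := by
  simp [Fin.sum_univ_castSucc]

lemma mem_simplexInt_iff_bary_pos {t : Fin m → ℝ} :
    t ∈ simplexInt (m + 1) ↔ ∀ i, 0 < bary (m + 1) t i := by
  simp [Fin.forall_fin_succ', simplexInt]

end Simplex

lemma integrableOn_pi_Ioo_prod_rpow {ι : Type*} [Fintype ι] {β : ι → ℝ} (hβ : ∀ j, -1 < β j) :
    IntegrableOn (fun t : ι → ℝ => ∏ j, t j ^ β j) (univ.pi fun _ => Ioo 0 1) := by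
  rw [IntegrableOn, volume_pi, Measure.restrict_pi_pi]
  exact Integrable.fintype_prod fun j =>
    (intervalIntegral.integrableOn_Ioo_rpow_iff one_pos).2 (hβ j)

lemma LinearMap.measurePreserving_of_involutive {E : Type*} [NormedAddCommGroup E]
    [NormedSpace ℝ E] [MeasurableSpace E] [BorelSpace E] [FiniteDimensional ℝ E]
    (μ : Measure E) [μ.IsAddHaarMeasure] {L : E →ₗ[ℝ] E} (hL : Function.Involutive L) :
    MeasurePreserving L μ μ := by
  have hdet : |LinearMap.det L| = 1 := by
    have hsq : LinearMap.det L * LinearMap.det L = 1 := by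
      rw [← LinearMap.det_comp, show L ∘ₗ L = LinearMap.id from LinearMap.ext hL,
        LinearMap.det_id]
    rw [← pow_eq_one_iff_of_nonneg (abs_nonneg _) two_ne_zero, sq_abs, sq, hsq]
  refine ⟨L.continuous_of_finiteDimensional.measurable, ?_⟩
  rw [Measure.map_linearMap_addHaar_eq_smul_addHaar μ fun h => by simp [h] at hdet,
    abs_inv, hdet]
  simp

section SimplexSwap

variable {m : ℕ}

/-- The affine involution exchanging the barycentric coordinates `i` and `m`. -/
def simplexSwap (i : Fin m) (t : Fin m → ℝ) : Fin m → ℝ :=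
  Function.update t i (1 - ∑ l, t l)

lemma sum_update_eq_sub_add {ι M : Type*} [Fintype ι] [DecidableEq ι] [AddCommGroup M] (t : ι → M)
    (i : ι) (x : M) : ∑ l, Function.update t i x l = ∑ l, t l - t i + x := by
  rw [Finset.sum_update_of_mem (Finset.mem_univ i), Finset.sum_eq_sum_sdiff_singleton_add
    (Finset.mem_univ i) t]
  abel

lemma bary_simplexSwap (i : Fin m) (t : Fin m → ℝ) (j : Fin (m + 1)) :
    bary (m + 1) (simplexSwap i t) j = bary (m + 1) t (Equiv.swap i.castSucc (Fin.last m) j) := by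
  induction j using Fin.lastCases with
  | last => simp [simplexSwap, sum_update_eq_sub_add]
  | cast l =>
    rcases eq_or_ne l i with rfl | hl
    · simp [simplexSwap]
    · rw [Equiv.swap_apply_of_ne_of_ne (by simpa using hl) (Fin.castSucc_ne_last l)]
      simp [simplexSwap, hl]

lemma simplexSwap_involutive (i : Fin m) : Function.Involutive (simplexSwap i) := fun t => by
  funext l
  rw [← bary_castSucc (simplexSwap i _), bary_simplexSwap, bary_simplexSwap,
    Equiv.swap_apply_self, bary_castSucc]

def simplexSwapLinear (i : Fin m) : (Fin m → ℝ) →ₗ[ℝ] Fin m → ℝ where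
  toFun t := Function.update t i (-∑ l, t l)
  map_add' t s := by rw [← Function.update_add]; simp [Finset.sum_add_distrib, add_comm]
  map_smul' c t := by
    rw [← Function.update_smul]
    simp [Finset.mul_sum]

lemma measurePreserving_simplexSwap (i : Fin m) : MeasurePreserving (simplexSwap i) := by
  have hinv : Function.Involutive (simplexSwapLinear i) := fun t => by
    funext l
    simp only [simplexSwapLinear, LinearMap.coe_mk, AddHom.coe_mk, sum_update_eq_sub_add]
    rcases eq_or_ne l i with rfl | hl <;> simp [*]
  have heq : simplexSwap i = (fun t => Pi.single i 1 + t) ∘ simplexSwapLinear i := by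
    funext t l
    rcases eq_or_ne l i with rfl | hl <;> simp [simplexSwap, simplexSwapLinear, *]
    ring
  rw [heq]
  exact (measurePreserving_add_left volume _).comp
    (LinearMap.measurePreserving_of_involutive volume hinv)

end SimplexSwap

section Dirichlet

variable {m : ℕ}

lemma rpow_le_max_one_rpow {x c α : ℝ} (hc : 0 < c) (hcx : c ≤ x) (hx : x ≤ 1) :
    x ^ α ≤ max 1 (c ^ α) := by
  rcases le_or_gt 0 α with hα | hα
  · exact (rpow_le_one (hc.le.trans hcx) hx hα).trans (le_max_left _ _)
  · exact (rpow_le_rpow_of_nonpos hc hcx hα.le).trans (le_max_right _ _)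

lemma simplexSwap_mem_simplexInt_iff (i : Fin m) {t : Fin m → ℝ} :
    simplexSwap i t ∈ simplexInt (m + 1) ↔ t ∈ simplexInt (m + 1) := by
  rw [mem_simplexInt_iff_bary_pos, mem_simplexInt_iff_bary_pos]
  simp only [bary_simplexSwap]
  exact (Equiv.swap _ _).forall_congr_right (q := fun j => 0 < bary (m + 1) t j)

lemma integrableOn_prod_bary_rpow_of_le_bary_last {α : Fin (m + 1) → ℝ} (hα : ∀ i, -1 < α i)
    {c : ℝ} (hc : 0 < c) :
    IntegrableOn (fun t : Fin m → ℝ => ∏ i, bary (m + 1) t i ^ α i)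
      ({t : Fin m → ℝ | c ≤ bary (m + 1) t (Fin.last m)} ∩ simplexInt (m + 1)) := by
  have hS :
      MeasurableSet ({t : Fin m → ℝ | c ≤ bary (m + 1) t (Fin.last m)} ∩ simplexInt (m + 1)) :=
    (measurableSet_le measurable_const (measurable_bary (n := m + 1) _)).inter
      (measurableSet_simplexInt (n := m + 1))
  refine Integrable.mono' (IntegrableOn.mono_set
    ((integrableOn_pi_Ioo_prod_rpow fun j : Fin m => hα j.castSucc).const_mul
      (max 1 (c ^ α (Fin.last m)))) (inter_subset_right.trans simplexInt_subset_pi_Ioo))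
    (Finset.measurable_prod _ fun i _ =>
      (measurable_bary (n := m + 1) i).pow_const _).aestronglyMeasurable
    (ae_restrict_of_forall_mem hS ?_)
  rintro t ⟨hct, ht⟩
  rw [norm_of_nonneg (Finset.prod_nonneg fun i _ => rpow_nonneg (bary_pos ht i).le _),
    Fin.prod_univ_castSucc, mul_comm]
  simp only [bary_castSucc]
  exact mul_le_mul_of_nonneg_right (rpow_le_max_one_rpow hc hct (bary_le_one ht _))
    (Finset.prod_nonneg fun j _ => rpow_nonneg (ht.1 j).le _)

lemma integrableOn_prod_bary_rpow_of_le_bary {α : Fin (m + 1) → ℝ} (hα : ∀ i, -1 < α i)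
    {c : ℝ} (hc : 0 < c) (i : Fin (m + 1)) :
    IntegrableOn (fun t : Fin m → ℝ => ∏ i, bary (m + 1) t i ^ α i)
      ({t : Fin m → ℝ | c ≤ bary (m + 1) t i} ∩ simplexInt (m + 1)) := by
  induction i using Fin.lastCases with
  | last => exact integrableOn_prod_bary_rpow_of_le_bary_last hα hc
  | cast i =>
    set σ := Equiv.swap i.castSucc (Fin.last m)
    have hpre : simplexSwap i ⁻¹' ({t | c ≤ bary (m + 1) t i.castSucc} ∩ simplexInt (m + 1)) =
        {t | c ≤ bary (m + 1) t (Fin.last m)} ∩ simplexInt (m + 1) := by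
      ext t
      refine and_congr ?_ (simplexSwap_mem_simplexInt_iff i)
      change c ≤ _ ↔ c ≤ _
      rw [bary_simplexSwap, Equiv.swap_apply_left]
    have hcomp : (fun t : Fin m → ℝ => ∏ i, bary (m + 1) t i ^ α i) ∘ simplexSwap i =
        fun t => ∏ j, bary (m + 1) t j ^ α (σ j) := by
      funext t
      simp only [Function.comp_apply, bary_simplexSwap]
      exact Fintype.prod_equiv σ _ _ fun j => by simp [σ]
    rw [← (measurePreserving_simplexSwap i).integrableOn_comp_preimage
      (MeasurableEquiv.ofInvolutive _ (simplexSwap_involutive i)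
        (measurePreserving_simplexSwap i).measurable).measurableEmbedding, hpre, hcomp]
    exact integrableOn_prod_bary_rpow_of_le_bary_last (fun j => hα _) hc

end Dirichlet

lemma integrableOn_prod_bary_rpow {n : ℕ} {α : Fin n → ℝ} (hα : ∀ i, -1 < α i) :
    IntegrableOn (fun t => ∏ i, bary n t i ^ α i) (simplexInt n) := by
  cases n with
  | zero => simp
  | succ m =>
    have hcover : simplexInt (m + 1) ⊆
        ⋃ i, {t : Fin m → ℝ | 1 / (m + 1 : ℝ) ≤ bary (m + 1) t i} ∩ simplexInt (m + 1) := by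
      intro t ht
      obtain ⟨i, -, hi⟩ := Finset.exists_le_of_sum_le (f := fun _ => 1 / (m + 1 : ℝ))
        (g := bary (m + 1) t) Finset.univ_nonempty (by rw [sum_bary]; simp [field])
      exact mem_iUnion.2 ⟨i, hi, ht⟩
    exact (integrableOn_finite_iUnion.2 fun i =>
      integrableOn_prod_bary_rpow_of_le_bary hα (by positivity) i).mono_set hcover

lemma integrableOn_prod_bary_rpow_mul {n : ℕ} {α : Fin n → ℝ} (hα : ∀ i, -1 < α i)
    {g : Fin n → ℝ → ℝ} (hg : ∀ i, Measurable (g i)) {C : Fin n → ℝ}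
    (hgC : ∀ i, ∀ x ∈ Ioc (0 : ℝ) 1, ‖g i x‖ ≤ C i) :
    IntegrableOn (fun t => ∏ i, (bary n t i ^ α i * g i (bary n t i))) (simplexInt n) := by
  simp_rw [Finset.prod_mul_distrib, mul_comm (∏ i, bary n _ i ^ α i)]
  refine (integrableOn_prod_bary_rpow hα).bdd_mul (c := ∏ i, C i)
    (Finset.measurable_prod _ fun i _ => (hg i).comp (measurable_bary i)).aestronglyMeasurable
    (ae_restrict_of_forall_mem measurableSet_simplexInt fun t ht => ?_)
  rw [norm_prod]
  exact Finset.prod_le_prod (fun i _ => norm_nonneg _)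
    fun i _ => hgC i _ ⟨bary_pos ht i, bary_le_one ht i⟩

section BetaIntegrands

variable {n : ℕ} {k : ℝ} {η φ : Fin n → ℝ}

lemma integrableOn_betaKe2_integrand (hk : 0 < k) (hη : ∀ i, 0 < η i) (hφ : ∀ i, 0 < φ i) :
    IntegrableOn (fun t => ∏ i, (bary n t i ^ (φ i / k - 1) *
      exp (-((η i)^k)/(k * bary n t i)))) (simplexInt n) :=
  integrableOn_prod_bary_rpow_mul (fun i => by linarith [div_pos (hφ i) hk]) (C := fun _ => 1)
    (g := fun i x => exp (-((η i)^k)/(k * x))) (fun i => by fun_prop) fun i x hx => by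
      rw [norm_of_nonneg (exp_pos _).le, exp_le_one_iff]
      exact div_nonpos_of_nonpos_of_nonneg (neg_nonpos.2 (rpow_pos_of_pos (hη i) k).le)
        (mul_nonneg hk.le hx.1.le)

lemma integrableOn_betaSecond_integrand {p q ζ : Fin n → ℝ} (hk : 0 < k)
    (hp : ∀ i, 0 < p i) (hqp : ∀ i, 0 < q i - p i) (hη : ∀ i, 0 < η i) (hζ : ∀ i, 0 ≤ ζ i)
    (hφ : ∀ i, 0 < φ i) :
    IntegrableOn (fun t => ∏ i, (bary n t i ^ (φ i / k - 1) * F1k k (p i) (q i)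
      (-((η i)^k)/(k * bary n t i) - (ζ i)^k * bary n t i / (η i)^k))) (simplexInt n) := by
  have hF : ∀ i, Monotone (F1k k (p i) (q i)) := fun i => monotone_F1k hk (hp i) (hqp i)
  refine integrableOn_prod_bary_rpow_mul (fun i => by linarith [div_pos (hφ i) hk])
    (C := fun i => F1k k (p i) (q i) 0)
    (g := fun i x => F1k k (p i) (q i) (-((η i)^k)/(k * x) - (ζ i)^k * x / (η i)^k))
    (fun i => (hF i).measurable.comp (by fun_prop)) fun i x hx => ?_
  rw [norm_of_nonneg (F1k_nonneg hk (hp i) (hqp i) _)]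
  have hηk := rpow_pos_of_pos (hη i) k
  have hA : 0 ≤ (η i)^k / (k * x) := div_nonneg hηk.le (mul_nonneg hk.le hx.1.le)
  have hB : 0 ≤ (ζ i)^k * x / (η i)^k :=
    div_nonneg (mul_nonneg (rpow_nonneg (hζ i) k) hx.1.le) hηk.le
  refine hF i ?_
  rw [neg_div]
  linarith

end BetaIntegrands

lemma exp_mul_F1k_le_F1k {k a b η ζ x : ℝ} (hk : 0 < k) (ha : 0 < a) (hba : 0 < b - a)
    (hη : 0 < η) (hζ : 0 ≤ ζ) (hx : 0 < x) (hx1 : x ≤ 1) :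
    exp (-(η ^ k) / (k * x)) * F1k k a b (-(ζ ^ k) / η ^ k) ≤
      F1k k a b (-(η ^ k) / (k * x) - ζ ^ k * x / η ^ k) := by
  have hA : 0 ≤ η ^ k / (k * x) := by have := rpow_pos_of_pos hη k; positivity
  have hB : 0 ≤ ζ ^ k / η ^ k := by
    have := rpow_pos_of_pos hη k; have := rpow_nonneg hζ k; positivity
  rw [neg_div, neg_div, mul_div_right_comm]
  exact exp_neg_mul_F1k_neg_le hk ha hba hA hB hx1

theorem stmt17_general (n : ℕ) (k : ℝ) (hk : 0 < k)
    (p q η ζ : Fin n → ℝ)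
    (hp : ∀ i, 0 < p i) (hqp : ∀ i, 0 < q i - p i)
    (hη : ∀ i, 0 < η i) (hζ : ∀ i, 0 ≤ ζ i)
    (φ : Fin n → ℝ) (hφ : ∀ i, 0 < φ i) :
    betaKe2 n k φ η * ∏ i, F1k k (p i) (q i) (-((ζ i)^k) / (η i)^k) ≤
      betaSecond n k p q η ζ φ := by
  unfold betaKe2 betaSecond
  rw [mul_assoc, ← integral_mul_const]
  refine mul_le_mul_of_nonneg_left (setIntegral_mono_on
    ((integrableOn_betaKe2_integrand hk hη hφ).mul_const _)
    (integrableOn_betaSecond_integrand hk hp hqp hη hζ hφ) measurableSet_simplexInt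
    fun t ht => ?_) (by positivity)
  have hb := bary_pos ht
  rw [← Finset.prod_mul_distrib]
  refine Finset.prod_le_prod (fun i _ => mul_nonneg (mul_nonneg (rpow_nonneg (hb i).le _)
    (exp_pos _).le) (F1k_nonneg hk (hp i) (hqp i) _)) fun i _ => ?_
  rw [mul_assoc]
  exact mul_le_mul_of_nonneg_left (exp_mul_F1k_le_F1k hk (hp i) (hqp i) (hη i) (hζ i)
    (hb i) (bary_le_one ht i)) (rpow_nonneg (hb i).le _)

theorem stmt17 (n : ℕ) (hn : 2 ≤ n) (k : ℝ) (hk : 0 < k)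
    (p q η ζ : Fin n → ℝ)
    (hp : ∀ i, 0 < p i) (hqp : ∀ i, 0 < q i - p i)
    (hη : ∀ i, 0 < η i) (hζ : ∀ i, 0 ≤ ζ i)
    (φ : Fin n → ℝ) (hφ : ∀ i, 0 < φ i) :
    betaKe2 n k φ η * ∏ i, F1k k (p i) (q i) (-((ζ i)^k) / (η i)^k) ≤
      betaSecond n k p q η ζ φ :=
  stmt17_general n k hk p q η ζ hp hqp hη hζ φ hφ
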